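/- (Sequence contraction for the relaxed PPA.) Let Σ ∈ ℝ^{(n+m)×(n+m)} be symmetric positive semidefinite, w^k ∈ ℝⁿ⁺ᵐ, and γ ∈ (0, 2). Suppose w* = (x*, λ*) ∈ Ω is a VI solution, w̃ = (x̃, λ̃) ∈ Ω satisfies the proximal VI at w^k with matrix Σ, and set w^{k+1} = w^k − γ(w^k − w̃). Then ‖w^{k+1} − w*‖²_Σ ≤ ‖w^k − w*‖²_Σ − γ(2 − γ)‖w̃ − w^k‖²_Σ. -/

import Mathlib

open Matrix

/-- The continuous linear functional `u ↦ v ⬝ᵥ u` on `ℝⁿ`, used to express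
that `v` is the gradient of a scalar function. -/
noncomputable def dotCLM {n : ℕ} (v : Fin n → ℝ) : (Fin n → ℝ) →L[ℝ] ℝ :=
  LinearMap.toContinuousLinearMap (∑ j, v j • LinearMap.proj j)

/-- The `x`-part of `w = (x, λ) ∈ ℝⁿ⁺ᵐ`. -/
def xpart {n m : ℕ} (w : Fin n ⊕ Fin m → ℝ) : Fin n → ℝ := fun i => w (Sum.inl i)

/-- The `λ`-part of `w = (x, λ) ∈ ℝⁿ⁺ᵐ`. -/
def lpart {n m : ℕ} (w : Fin n ⊕ Fin m → ℝ) : Fin m → ℝ := fun j => w (Sum.inr j)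

/-- `Ω = X × ℝ₊ᵐ` viewed inside `ℝⁿ⁺ᵐ`. -/
def OmegaSet {n m : ℕ} (X : Set (Fin n → ℝ)) : Set (Fin n ⊕ Fin m → ℝ) :=
  {w | xpart w ∈ X ∧ ∀ j, 0 ≤ lpart w j}

/-- `Γ(w) = (DΦ(x)ᵀλ, −Φ(x))` for `w = (x, λ)`, where row `i` of the Jacobian `DΦ`
is the gradient `φ' i`. -/
noncomputable def Gam {n m : ℕ} (φ : Fin m → (Fin n → ℝ) → ℝ)
    (φ' : Fin m → (Fin n → ℝ) → (Fin n → ℝ)) (w : Fin n ⊕ Fin m → ℝ) :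
    Fin n ⊕ Fin m → ℝ :=
  Sum.elim (∑ i, lpart w i • φ' i (xpart w)) (fun i => -(φ i (xpart w)))

lemma dotCLM_apply {n : ℕ} (v u : Fin n → ℝ) : dotCLM v u = v ⬝ᵥ u := by
  simp [dotCLM, dotProduct, LinearMap.toContinuousLinearMap]

/-- Gradient inequality for a convex differentiable function. -/
lemma grad_ineq {n : ℕ} {φ : (Fin n → ℝ) → ℝ} (hφ : ConvexOn ℝ Set.univ φ)
    {x y g : Fin n → ℝ} (hd : HasFDerivAt φ (dotCLM g) x) :
    φ x + g ⬝ᵥ (y - x) ≤ φ y := by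
  set h : ℝ → ℝ := fun t => φ (x + t • (y - x)) with hh
  have hmap : HasDerivAt (fun t : ℝ => x + t • (y - x)) (y - x) 0 := by
    simpa using ((hasDerivAt_id (0:ℝ)).smul_const (y - x)).const_add x
  have hline : HasDerivAt h (g ⬝ᵥ (y - x)) 0 := by
    have hd' : HasFDerivAt φ (dotCLM g) (x + (0:ℝ) • (y - x)) := by simpa using hd
    have := hd'.comp_hasDerivAt 0 hmap
    simp only [dotCLM_apply] at this
    exact this
  have hslope : ∀ t ∈ Set.Ioo (0:ℝ) 1, slope h 0 t ≤ φ y - φ x := by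
    intro t ht
    have hcvx := hφ.2 (Set.mem_univ x) (Set.mem_univ y)
      (by linarith [ht.2] : (0:ℝ) ≤ 1 - t) (le_of_lt ht.1) (by ring)
    have hht : h t ≤ (1 - t) * φ x + t * φ y := by
      have : x + t • (y - x) = (1 - t) • x + t • y := by
        module
      simpa [hh, this, smul_eq_mul] using hcvx
    have h0 : h 0 = φ x := by simp [hh]
    rw [slope_def_field, h0]
    rw [sub_zero, div_le_iff₀ ht.1]
    nlinarith [ht.1]
  have htend : Filter.Tendsto (slope h 0) (nhdsWithin 0 (Set.Ioi 0)) (nhds (g ⬝ᵥ (y - x))) := by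
    refine (hasDerivAt_iff_tendsto_slope.mp hline).mono_left ?_
    exact nhdsWithin_mono _ (fun t ht => ne_of_gt ht)
  have : g ⬝ᵥ (y - x) ≤ φ y - φ x := by
    refine le_of_tendsto htend ?_
    filter_upwards [Ioo_mem_nhdsGT_of_mem ⟨le_refl 0, zero_lt_one⟩] with t ht
    exact hslope t ht
  linarith

lemma gam_split {n m : ℕ} (φ : Fin m → (Fin n → ℝ) → ℝ)
    (φ' : Fin m → (Fin n → ℝ) → (Fin n → ℝ)) (u w : Fin n ⊕ Fin m → ℝ) :
    u ⬝ᵥ Gam φ φ' w =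
      ∑ k, (lpart w k * (φ' k (xpart w) ⬝ᵥ xpart u) - lpart u k * φ k (xpart w)) := by
  simp only [dotProduct, Fintype.sum_sum_type, Gam, Sum.elim_inl, Sum.elim_inr,
    Finset.sum_apply, Pi.smul_apply, smul_eq_mul, Finset.mul_sum, mul_neg]
  rw [Finset.sum_comm, ← Finset.sum_add_distrib]
  refine Finset.sum_congr rfl fun k _ => ?_
  simp only [dotProduct, xpart, lpart, Finset.mul_sum, sub_eq_add_neg]
  congr 1
  exact Finset.sum_congr rfl fun i _ => by ring

/-- Sequence contraction for the relaxed PPA. -/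
theorem stmt5 {n m : ℕ}
    (hn : 0 < n) (hm : 0 < m)
    (X : Set (Fin n → ℝ)) (hXne : X.Nonempty) (hXcl : IsClosed X) (hXcvx : Convex ℝ X)
    (f : (Fin n → ℝ) → ℝ) (hf : ConvexOn ℝ Set.univ f)
    (φ : Fin m → (Fin n → ℝ) → ℝ) (hφ : ∀ i, ConvexOn ℝ Set.univ (φ i))
    (φ' : Fin m → (Fin n → ℝ) → (Fin n → ℝ))
    (hφ' : ∀ i x, HasFDerivAt (φ i) (dotCLM (φ' i x)) x)
    (hφ'c : ∀ i, Continuous (φ' i))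
    (S : Matrix (Fin n ⊕ Fin m) (Fin n ⊕ Fin m) ℝ) (hS : S.PosSemidef)
    (γ : ℝ) (hγ0 : 0 < γ) (hγ2 : γ < 2)
    (wk ws wt : Fin n ⊕ Fin m → ℝ)
    (hws : ws ∈ OmegaSet (m := m) X)
    (hVI : ∀ w ∈ OmegaSet (m := m) X,
      f (xpart w) - f (xpart ws) + (w - ws) ⬝ᵥ Gam φ φ' ws ≥ 0)
    (hwt : wt ∈ OmegaSet (m := m) X)
    (hprox : ∀ w ∈ OmegaSet (m := m) X,
      f (xpart w) - f (xpart wt) + (w - wt) ⬝ᵥ (Gam φ φ' wt + S.mulVec (wt - wk)) ≥ 0)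
    (wk1 : Fin n ⊕ Fin m → ℝ) (hwk1 : wk1 = wk - γ • (wk - wt)) :
    (wk1 - ws) ⬝ᵥ S.mulVec (wk1 - ws) ≤
      (wk - ws) ⬝ᵥ S.mulVec (wk - ws)
        - γ * (2 - γ) * ((wt - wk) ⬝ᵥ S.mulVec (wt - wk)) := by
  -- Monotonicity of Γ
  have hmono : (ws - wt) ⬝ᵥ Gam φ φ' wt + (wt - ws) ⬝ᵥ Gam φ φ' ws ≤ 0 := by
    rw [gam_split, gam_split, ← Finset.sum_add_distrib]
    refine Finset.sum_nonpos fun k _ => ?_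
    have hxs : xpart (ws - wt) = xpart ws - xpart wt := rfl
    have hxt : xpart (wt - ws) = xpart wt - xpart ws := rfl
    have hls : lpart (ws - wt) k = lpart ws k - lpart wt k := rfl
    have hlt : lpart (wt - ws) k = lpart wt k - lpart ws k := rfl
    rw [hxs, hxt, hls, hlt]
    have h1 : φ k (xpart wt) + φ' k (xpart wt) ⬝ᵥ (xpart ws - xpart wt) ≤ φ k (xpart ws) :=
      grad_ineq (hφ k) (hφ' k (xpart wt))
    have h2 : φ k (xpart ws) + φ' k (xpart ws) ⬝ᵥ (xpart wt - xpart ws) ≤ φ k (xpart wt) :=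
      grad_ineq (hφ k) (hφ' k (xpart ws))
    have hLt : 0 ≤ lpart wt k := hwt.2 k
    have hLs : 0 ≤ lpart ws k := hws.2 k
    nlinarith [mul_le_mul_of_nonneg_left h1 hLt, mul_le_mul_of_nonneg_left h2 hLs]
  -- Combine the two variational inequalities
  have h1 := hprox ws hws
  have h2 := hVI wt hwt
  rw [dotProduct_add] at h1
  have hkey : 0 ≤ (ws - wt) ⬝ᵥ S.mulVec (wt - wk) := by linarith [h1, h2, hmono]
  -- rewrite as (a - d) ⬝ S d ≥ 0 with a = wk - ws, d = wk - wt
  set a := wk - ws with ha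
  set d := wk - wt with hd
  have had : ws - wt = -(a - d) := by rw [ha, hd]; abel
  have hdd : wt - wk = -d := by rw [hd]; abel
  have hkey2 : 0 ≤ (a - d) ⬝ᵥ S.mulVec d := by
    have := hkey
    rw [had, hdd, Matrix.mulVec_neg, neg_dotProduct, dotProduct_neg, neg_neg] at this
    exact this
  -- symmetry of S
  have hsym : ∀ u v : Fin n ⊕ Fin m → ℝ, u ⬝ᵥ S.mulVec v = v ⬝ᵥ S.mulVec u := by
    intro u v
    have hT : Sᵀ = S := hS.1
    rw [Matrix.dotProduct_mulVec, ← Matrix.mulVec_transpose, hT, dotProduct_comm]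
  -- expand the quadratic
  have hwk1' : wk1 - ws = a - γ • d := by rw [hwk1, ha, hd]; abel
  have hexp : (wk1 - ws) ⬝ᵥ S.mulVec (wk1 - ws)
      = a ⬝ᵥ S.mulVec a - 2 * γ * (a ⬝ᵥ S.mulVec d) + γ^2 * (d ⬝ᵥ S.mulVec d) := by
    rw [hwk1']
    simp only [sub_dotProduct, dotProduct_sub, Matrix.mulVec_sub, Matrix.mulVec_smul,
      smul_dotProduct, dotProduct_smul, smul_eq_mul]
    rw [hsym d a]
    ring
  have htk : (wt - wk) ⬝ᵥ S.mulVec (wt - wk) = d ⬝ᵥ S.mulVec d := by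
    rw [hdd, Matrix.mulVec_neg, neg_dotProduct, dotProduct_neg, neg_neg]
  have hak : (wk - ws) ⬝ᵥ S.mulVec (wk - ws) = a ⬝ᵥ S.mulVec a := rfl
  rw [hexp, htk, hak]
  have hcross : d ⬝ᵥ S.mulVec d ≤ a ⬝ᵥ S.mulVec d := by
    have := hkey2
    rw [sub_dotProduct] at this
    linarith
  nlinarith [mul_le_mul_of_nonneg_left hcross (le_of_lt hγ0)]
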